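/- Let N ∈ ℕ, let U : ℝ² → ℝ be measurable, vanish outside Π, and satisfy ∫_Π U(y)² dy = 1, and let w_1, …, w_N : ℝ → ℝ be measurable with ∫_ℝ w_j w_k dζ = δ_{jk} and |w_j(ζ)| ≤ C e^{−b|ζ|} for all ζ and some C, b > 0. Then there exists c_N > 0 such that for every H ≥ 1 and all j, k ∈ {1, …, N} the rhombic trial functions satisfy |∫_{Q^H} Φ_j^H(x) Φ_k^H(x) dx − δ_{jk}| ≤ c_N H^{−2/3}. In particular, for H large enough the functions Φ_1^H, …, Φ_N^H are linearly independent. -/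

import Mathlib

noncomputable section
open MeasureTheory Real

abbrev E2 : Type := EuclideanSpace ℝ (Fin 2)
abbrev E3 : Type := EuclideanSpace ℝ (Fin 3)

/-- The planar cross `Π = {y ∈ ℝ² : |y₁| < 1/2 or |y₂| < 1/2}`. -/
def planarCross : Set E2 := {y | |y 0| < 1 / 2 ∨ |y 1| < 1 / 2}

/-- The rhombic cruciform waveguide
`Q^H = {x ∈ ℝ³ : |x₂| + |x₃|/H < 1/2 or |x₁| + |x₃|/H < 1/2}`. -/
def rhombicWaveguide (H : ℝ) : Set E3 :=
  {x | |x 1| + |x 2| / H < 1 / 2 ∨ |x 0| + |x 2| / H < 1 / 2}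

/-- The width function `h(z) = 1 − 2|z|/H` of the rhombic waveguide. -/
def hRh (H z : ℝ) : ℝ := 1 - 2 * |z| / H

/-- The rhombic trial function
`Φ^H(x) = H^{−1/6} χ(2H^{−2/3}ζ) w(ζ) U(x₁/h(x₃), x₂/h(x₃))`, `ζ = H^{−1/3}x₃`,
for `|x₃| < H/2`, extended by zero for `|x₃| ≥ H/2`. -/
def trialRh (χ : ℝ → ℝ) (w : ℝ → ℝ) (U : E2 → ℝ) (H : ℝ) (x : E3) : ℝ :=
  if |x 2| < H / 2 then
    H ^ (-(1 : ℝ) / 6) * χ (2 * H ^ (-(2 : ℝ) / 3) * (H ^ (-(1 : ℝ) / 3) * x 2)) *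
      w (H ^ (-(1 : ℝ) / 3) * x 2) *
      U ((EuclideanSpace.equiv (Fin 2) ℝ).symm
          ![x 0 / hRh H (x 2), x 1 / hRh H (x 2)])
  else 0

open Set

lemma chi_sq_bound {χ : ℝ → ℝ} (hχ01 : ∀ τ, 0 ≤ χ τ ∧ χ τ ≤ 1)
    (hχ1 : ∀ τ : ℝ, |τ| ≤ 1 / 4 → χ τ = 1) (hχ0 : ∀ τ : ℝ, 1 / 2 ≤ |τ| → χ τ = 0)
    (u : ℝ) : |χ u ^ 2 * (1 - |u|) ^ 2 - 1| ≤ 4 * |u| := by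
  have ha : (0:ℝ) ≤ |u| := abs_nonneg u
  rcases le_or_gt (|u|) (1/4) with h | h
  · rw [hχ1 u h, abs_le]
    constructor <;> nlinarith
  · rcases le_or_gt (1/2) (|u|) with h2 | h2
    · rw [hχ0 u h2, abs_le]
      constructor <;> nlinarith
    · obtain ⟨hc0, hc1⟩ := hχ01 u
      rw [abs_le]
      have e2 : χ u ^ 2 ≤ 1 := by nlinarith
      have e1 : (1 - |u|) ^ 2 ≤ 1 := by nlinarith
      have hle : χ u ^ 2 * (1 - |u|) ^ 2 ≤ 1 := mul_le_one₀ e2 (sq_nonneg _) e1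
      have hge : 0 ≤ χ u ^ 2 * (1 - |u|) ^ 2 := by positivity
      constructor <;> nlinarith

lemma integrable_exp_neg_mul_abs {b : ℝ} (hb : 0 < b) :
    Integrable (fun x : ℝ => Real.exp (-b * |x|)) := by
  have h1 : IntegrableOn (fun x : ℝ => Real.exp (-b * |x|)) (Ioi 0) := by
    refine (exp_neg_integrableOn_Ioi 0 hb).congr_fun (fun x hx => ?_) measurableSet_Ioi
    rw [abs_of_pos (by exact hx)]
  have h2 : IntegrableOn (fun x : ℝ => Real.exp (-b * |x|)) (Iic 0) := by
    rw [← Measure.map_neg_eq_self (volume : Measure ℝ)]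
    have m : MeasurableEmbedding fun x : ℝ => -x :=
      (Homeomorph.neg ℝ).isClosedEmbedding.measurableEmbedding
    rw [m.integrableOn_map_iff]
    simp only [Function.comp_def, abs_neg]
    have : (fun x : ℝ => -x) ⁻¹' (Iic 0) = Ici 0 := by
      ext x; simp [neg_nonpos]
    rw [this]
    exact Iff.mpr integrableOn_Ici_iff_integrableOn_Ioi h1
  rw [← integrableOn_univ, ← Set.Iic_union_Ioi (a := (0:ℝ))]
  exact h2.union h1

lemma abs_mul_exp_le {b x : ℝ} (hb : 0 < b) :
    |x| * Real.exp (-b * |x|) ≤ b⁻¹ := by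
  have h := Real.add_one_le_exp (b * |x|)
  have hp : (0:ℝ) < Real.exp (b * |x|) := Real.exp_pos _
  have hip : (0:ℝ) < (Real.exp (b * |x|))⁻¹ := by positivity
  have hmul : Real.exp (b * |x|) * (Real.exp (b * |x|))⁻¹ = 1 := mul_inv_cancel₀ hp.ne'
  have hbi : b * b⁻¹ = 1 := mul_inv_cancel₀ hb.ne'
  rw [neg_mul, Real.exp_neg]
  have h1 : (b * |x|) * (Real.exp (b * |x|))⁻¹ ≤ 1 := by
    calc (b * |x|) * (Real.exp (b * |x|))⁻¹ ≤ Real.exp (b * |x|) * (Real.exp (b * |x|))⁻¹ :=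
          mul_le_mul_of_nonneg_right (by linarith) hip.le
      _ = 1 := hmul
  nlinarith [abs_nonneg x]

lemma rhombic_estimate
    (χ : ℝ → ℝ) (hχc : Continuous χ) (hχ01 : ∀ τ, 0 ≤ χ τ ∧ χ τ ≤ 1)
    (hχ1 : ∀ τ : ℝ, |τ| ≤ 1 / 4 → χ τ = 1) (hχ0 : ∀ τ : ℝ, 1 / 2 ≤ |τ| → χ τ = 0)
    (wj wk : ℝ → ℝ) (hwjm : Measurable wj) (hwkm : Measurable wk)
    (C b : ℝ) (hC : 0 < C) (hb : 0 < b)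
    (hdj : ∀ ζ, |wj ζ| ≤ C * Real.exp (-b * |ζ|))
    (hdk : ∀ ζ, |wk ζ| ≤ C * Real.exp (-b * |ζ|))
    (t : ℝ) (ht0 : 0 < t) :
    |(∫ ζ : ℝ, (χ (2 * t * ζ)) ^ 2 * (wj ζ * wk ζ) * (1 - 2 * t * |ζ|) ^ 2) -
        ∫ ζ : ℝ, wj ζ * wk ζ|
      ≤ (8 * C ^ 2 / b * ∫ ζ : ℝ, Real.exp (-b * |ζ|)) * t := by
  set Eb : ℝ → ℝ := fun ζ => Real.exp (-b * |ζ|) with hEbdef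
  have hEb : Integrable Eb := integrable_exp_neg_mul_abs hb
  have hEb0 : ∀ ζ, 0 < Eb ζ := fun ζ => Real.exp_pos _
  have hEb1 : ∀ ζ, Eb ζ ≤ 1 := fun ζ =>
    Real.exp_le_one_iff.mpr (by simp [neg_mul]; positivity)
  have hwwm : Measurable fun ζ => wj ζ * wk ζ := hwjm.mul hwkm
  have hww2 : ∀ ζ, |wj ζ * wk ζ| ≤ C ^ 2 * (Eb ζ * Eb ζ) := by
    intro ζ
    rw [abs_mul]
    calc |wj ζ| * |wk ζ| ≤ (C * Eb ζ) * (C * Eb ζ) :=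
          mul_le_mul (hdj ζ) (hdk ζ) (abs_nonneg _) (by positivity)
      _ = C ^ 2 * (Eb ζ * Eb ζ) := by ring
  have hwwbound : ∀ ζ, |wj ζ * wk ζ| ≤ C ^ 2 * Eb ζ := by
    intro ζ
    refine (hww2 ζ).trans ?_
    calc C ^ 2 * (Eb ζ * Eb ζ) ≤ C ^ 2 * (Eb ζ * 1) := by
          refine mul_le_mul_of_nonneg_left ?_ (by positivity)
          exact mul_le_mul_of_nonneg_left (hEb1 ζ) (hEb0 ζ).le
      _ = C ^ 2 * Eb ζ := by ring
  have hww_int : Integrable fun ζ => wj ζ * wk ζ := by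
    refine Integrable.mono' (hEb.const_mul (C ^ 2)) hwwm.aestronglyMeasurable ?_
    exact ae_of_all _ fun ζ => by rw [Real.norm_eq_abs]; exact hwwbound ζ
  set ψ : ℝ → ℝ := fun ζ => (χ (2 * t * ζ)) ^ 2 * (wj ζ * wk ζ) * (1 - 2 * t * |ζ|) ^ 2
    with hψdef
  have hdiff : ∀ ζ, |ψ ζ - wj ζ * wk ζ| ≤ (8 * C ^ 2 / b * t) * Eb ζ := by
    intro ζ
    have habs : 2 * t * |ζ| = |2 * t * ζ| := by
      rw [abs_mul, abs_of_nonneg (by positivity : (0:ℝ) ≤ 2 * t)]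
    have h1 : ψ ζ - wj ζ * wk ζ
        = (wj ζ * wk ζ) * ((χ (2 * t * ζ)) ^ 2 * (1 - |2 * t * ζ|) ^ 2 - 1) := by
      rw [hψdef]; simp only []; rw [habs]; ring
    rw [h1, abs_mul]
    calc |wj ζ * wk ζ| * |(χ (2 * t * ζ)) ^ 2 * (1 - |2 * t * ζ|) ^ 2 - 1|
        ≤ (C ^ 2 * (Eb ζ * Eb ζ)) * (4 * |2 * t * ζ|) :=
          mul_le_mul (hww2 ζ) (chi_sq_bound hχ01 hχ1 hχ0 _) (abs_nonneg _) (by positivity)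
      _ = (8 * C ^ 2 * t) * ((|ζ| * Eb ζ) * Eb ζ) := by rw [← habs]; ring
      _ ≤ (8 * C ^ 2 * t) * (b⁻¹ * Eb ζ) := by
          refine mul_le_mul_of_nonneg_left ?_ (by positivity)
          exact mul_le_mul_of_nonneg_right (abs_mul_exp_le hb) (hEb0 ζ).le
      _ = (8 * C ^ 2 / b * t) * Eb ζ := by ring
  have hψm : Measurable ψ := by
    apply Measurable.mul
    apply Measurable.mul
    · exact ((hχc.comp (by continuity)).measurable).pow_const 2
    · exact hwwm
    · exact (((continuous_const.sub ((continuous_const.mul continuous_abs)))).measurable).pow_const 2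
  have hdm : Measurable fun ζ => ψ ζ - wj ζ * wk ζ := hψm.sub hwwm
  have hd_int : Integrable fun ζ => ψ ζ - wj ζ * wk ζ := by
    refine Integrable.mono' (hEb.const_mul (8 * C ^ 2 / b * t)) hdm.aestronglyMeasurable ?_
    exact ae_of_all _ fun ζ => by rw [Real.norm_eq_abs]; exact hdiff ζ
  have hψ_int : Integrable ψ := by
    have h := hd_int.add hww_int
    have heq : ((fun ζ => ψ ζ - wj ζ * wk ζ) + fun ζ => wj ζ * wk ζ) = ψ := by
      funext ζ; simp
    rwa [heq] at h
  calc |(∫ ζ : ℝ, ψ ζ) - ∫ ζ : ℝ, wj ζ * wk ζ|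
      = |∫ ζ : ℝ, (ψ ζ - wj ζ * wk ζ)| := by rw [integral_sub hψ_int hww_int]
    _ ≤ ∫ ζ : ℝ, |ψ ζ - wj ζ * wk ζ| := by
        simpa [Real.norm_eq_abs] using
          norm_integral_le_integral_norm (fun ζ : ℝ => ψ ζ - wj ζ * wk ζ)
    _ ≤ ∫ ζ : ℝ, (8 * C ^ 2 / b * t) * Eb ζ := by
        refine integral_mono hd_int.abs (hEb.const_mul _) fun ζ => hdiff ζ
    _ = (8 * C ^ 2 / b * ∫ ζ : ℝ, Eb ζ) * t := by rw [integral_const_mul]; ring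


lemma planarCross_measurable : MeasurableSet planarCross := by
  have h0 : IsOpen {y : E2 | |y 0| < 1 / 2} :=
    isOpen_lt (continuous_abs.comp (EuclideanSpace.proj (0 : Fin 2)).continuous) continuous_const
  have h1 : IsOpen {y : E2 | |y 1| < 1 / 2} :=
    isOpen_lt (continuous_abs.comp (EuclideanSpace.proj (1 : Fin 2)).continuous) continuous_const
  exact (h0.union h1).measurableSet

set_option maxHeartbeats 2000000 in
lemma rhombic_key
    (χ : ℝ → ℝ) (hχc : Continuous χ) (hχ01 : ∀ τ, 0 ≤ χ τ ∧ χ τ ≤ 1)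
    (hχ0 : ∀ τ : ℝ, 1 / 2 ≤ |τ| → χ τ = 0)
    (U : E2 → ℝ) (hUmeas : Measurable U)
    (hU0 : ∀ y ∉ planarCross, U y = 0)
    (hUnorm : ∫ y in planarCross, (U y) ^ 2 = 1)
    (wj wk : ℝ → ℝ) (hwjm : Measurable wj) (hwkm : Measurable wk)
    (C b : ℝ) (hC : 0 < C) (hb : 0 < b)
    (hdj : ∀ ζ, |wj ζ| ≤ C * Real.exp (-b * |ζ|))
    (hdk : ∀ ζ, |wk ζ| ≤ C * Real.exp (-b * |ζ|))
    (H : ℝ) (hH : 1 ≤ H) :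
    IntegrableOn (fun x => trialRh χ wj U H x * trialRh χ wk U H x) (rhombicWaveguide H) ∧
    (∫ x in rhombicWaveguide H, trialRh χ wj U H x * trialRh χ wk U H x) =
      ∫ ζ : ℝ, (χ (2 * H ^ (-(2:ℝ)/3) * ζ)) ^ 2 * (wj ζ * wk ζ) *
        (1 - 2 * H ^ (-(2:ℝ)/3) * |ζ|) ^ 2 := by
  have hH0 : (0:ℝ) < H := lt_of_lt_of_le one_pos hH
  have hs0 : (0:ℝ) < H ^ (-(1:ℝ)/3) := Real.rpow_pos_of_pos hH0 _
  have ht0 : (0:ℝ) < H ^ (-(2:ℝ)/3) := Real.rpow_pos_of_pos hH0 _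
  have h16 : H ^ (-(1:ℝ)/6) * H ^ (-(1:ℝ)/6) = H ^ (-(1:ℝ)/3) := by
    rw [← Real.rpow_add hH0]; norm_num
  have hts : H ^ (-(2:ℝ)/3) * H ^ (-(1:ℝ)/3) = H⁻¹ := by
    rw [← Real.rpow_add hH0]
    norm_num
    exact Real.rpow_neg_one H
  -- the one-dimensional profiles
  set ψ : ℝ → ℝ := fun ζ => (χ (2 * H ^ (-(2:ℝ)/3) * ζ)) ^ 2 * (wj ζ * wk ζ) *
      (1 - 2 * H ^ (-(2:ℝ)/3) * |ζ|) ^ 2 with hψdef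
  set g : ℝ → ℝ := fun z => if |z| < H / 2 then
      H ^ (-(1:ℝ)/3) * (χ (2 * H ^ (-(2:ℝ)/3) * (H ^ (-(1:ℝ)/3) * z))) ^ 2 *
        (wj (H ^ (-(1:ℝ)/3) * z) * wk (H ^ (-(1:ℝ)/3) * z))
    else 0 with hgdef
  set f : E3 → ℝ := fun x => trialRh χ wj U H x * trialRh χ wk U H x with hfdef
  -- pointwise factorization
  have hprod : ∀ x : E3, f x = g (x 2) *
      (U ((EuclideanSpace.equiv (Fin 2) ℝ).symm
        ![x 0 / hRh H (x 2), x 1 / hRh H (x 2)])) ^ 2 := by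
    intro x
    by_cases hx : |x 2| < H / 2
    · simp only [hfdef, hgdef, trialRh, if_pos hx]
      rw [← h16]; ring
    · simp only [hfdef, hgdef, trialRh, if_neg hx]
      ring
  -- U² facts
  have hUsq0 : ∀ y ∉ planarCross, (U y) ^ 2 = 0 := fun y hy => by rw [hU0 y hy]; ring
  have hUint2 : ∫ y : E2, (U y) ^ 2 = 1 := by
    rw [← setIntegral_eq_integral_of_forall_compl_eq_zero hUsq0]
    exact hUnorm
  have hUsq_int : Integrable (fun y : E2 => (U y) ^ 2) := by
    have h1 : IntegrableOn (fun y : E2 => (U y) ^ 2) planarCross := by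
      by_contra hcon
      rw [MeasureTheory.integral_undef hcon] at hUnorm
      norm_num at hUnorm
    have hsupp : Function.support (fun y : E2 => (U y) ^ 2) ⊆ planarCross := by
      intro y hy
      by_contra hmem
      exact hy (hUsq0 y hmem)
    have h2 := (integrable_indicator_iff planarCross_measurable).mpr h1
    rwa [Set.indicator_eq_self.mpr hsupp] at h2
  have hUscale : ∀ h' : ℝ, ∫ y : E2, (U (h'⁻¹ • y)) ^ 2 = h' ^ 2 := by
    intro h'
    have h := MeasureTheory.Measure.integral_comp_inv_smul (volume : Measure E2)
      (fun y => (U y) ^ 2) h'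
    rw [hUint2, finrank_euclideanSpace_fin] at h
    rw [h, smul_eq_mul, mul_one, abs_of_nonneg (sq_nonneg h')]
  have hUscale_int : ∀ h' : ℝ, h' ≠ 0 → Integrable (fun y : E2 => (U (h'⁻¹ • y)) ^ 2) :=
    fun h' hne => hUsq_int.comp_smul (inv_ne_zero hne)
  -- g bounds and measurability
  have hgm : Measurable g := by
    rw [hgdef]
    refine Measurable.ite ?_ ?_ measurable_const
    · exact measurableSet_lt (continuous_abs.measurable) measurable_const
    · refine Measurable.mul (Measurable.mul measurable_const ?_) ?_
      · exact ((hχc.comp (continuous_const.mul (continuous_const.mul continuous_id))).measurable).pow_const 2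
      · exact ((hwjm.comp (measurable_const.mul measurable_id)).mul
          (hwkm.comp (measurable_const.mul measurable_id)))
  have hgbound : ∀ z, |g z| ≤ H ^ (-(1:ℝ)/3) * C ^ 2 := by
    intro z
    rw [hgdef]
    by_cases hz : |z| < H / 2
    · simp only [if_pos hz]
      obtain ⟨hχl, hχu⟩ := hχ01 (2 * H ^ (-(2:ℝ)/3) * (H ^ (-(1:ℝ)/3) * z))
      have hχsq : (χ (2 * H ^ (-(2:ℝ)/3) * (H ^ (-(1:ℝ)/3) * z))) ^ 2 ≤ 1 := by nlinarith
      have hwjb : |wj (H ^ (-(1:ℝ)/3) * z)| ≤ C := by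
        refine (hdj _).trans ?_
        have : Real.exp (-b * |H ^ (-(1:ℝ)/3) * z|) ≤ 1 :=
          Real.exp_le_one_iff.mpr (by rw [neg_mul]; simp; positivity)
        nlinarith
      have hwkb : |wk (H ^ (-(1:ℝ)/3) * z)| ≤ C := by
        refine (hdk _).trans ?_
        have : Real.exp (-b * |H ^ (-(1:ℝ)/3) * z|) ≤ 1 :=
          Real.exp_le_one_iff.mpr (by rw [neg_mul]; simp; positivity)
        nlinarith
      rw [abs_mul, abs_mul, abs_of_pos hs0, abs_mul]
      have h2 : |(χ (2 * H ^ (-(2:ℝ)/3) * (H ^ (-(1:ℝ)/3) * z))) ^ 2| ≤ 1 := by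
        rw [abs_of_nonneg (sq_nonneg _)]; exact hχsq
      calc H ^ (-(1:ℝ)/3) * |(χ (2 * H ^ (-(2:ℝ)/3) * (H ^ (-(1:ℝ)/3) * z))) ^ 2| *
            (|wj (H ^ (-(1:ℝ)/3) * z)| * |wk (H ^ (-(1:ℝ)/3) * z)|)
          ≤ H ^ (-(1:ℝ)/3) * 1 * (C * C) := by
            refine mul_le_mul ?_ ?_ (by positivity) (by positivity)
            · exact mul_le_mul_of_nonneg_left h2 hs0.le
            · exact mul_le_mul hwjb hwkb (abs_nonneg _) hC.le
        _ = H ^ (-(1:ℝ)/3) * C ^ 2 := by ring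
    · simp only [if_neg hz, abs_zero]
      positivity
  -- geometry of the width function
  have hhpos : ∀ z : ℝ, |z| < H / 2 → 0 < hRh H z := by
    intro z hz
    have h1 : 2 * |z| / H < 1 := by
      rw [div_lt_one hH0]; linarith
    simp only [hRh]; linarith
  have hhle1 : ∀ z : ℝ, hRh H z ≤ 1 := by
    intro z
    have h1 : 0 ≤ 2 * |z| / H := by positivity
    simp only [hRh]; linarith
  have hgz_lt : ∀ z : ℝ, g z ≠ 0 → |z| < H / 2 := by
    intro z hgz
    by_contra hz
    rw [hgdef] at hgz
    simp only [if_neg hz] at hgz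
    exact hgz rfl
  have hhcont : Continuous fun z : ℝ => hRh H z := by
    unfold hRh
    exact continuous_const.sub ((continuous_const.mul continuous_abs).div_const H)
  -- the product-space function
  set e2 : E2 ≃ᵐ (Fin 2 → ℝ) := (MeasurableEquiv.toLp 2 (Fin 2 → ℝ)).symm with he2def
  have he2pres : MeasurePreserving e2 := EuclideanSpace.volume_preserving_symm_measurableEquiv_toLp (Fin 2)
  set F : ℝ × (Fin 2 → ℝ) → ℝ :=
    fun p => g p.1 * (U ((hRh H p.1)⁻¹ • e2.symm p.2)) ^ 2 with hFdef
  have hcomp : ∀ z : ℝ, (fun y : Fin 2 → ℝ => (U ((hRh H z)⁻¹ • e2.symm y)) ^ 2) ∘ e2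
      = fun x : E2 => (U ((hRh H z)⁻¹ • x)) ^ 2 := by
    intro z
    funext x
    simp [Function.comp, MeasurableEquiv.symm_apply_apply]
  have hinner : ∀ z : ℝ, (∫ y : Fin 2 → ℝ, (U ((hRh H z)⁻¹ • e2.symm y)) ^ 2)
      = hRh H z ^ 2 := by
    intro z
    rw [← hUscale (hRh H z)]
    have h := he2pres.integral_comp'
      (g := fun y : Fin 2 → ℝ => (U ((hRh H z)⁻¹ • e2.symm y)) ^ 2)
    rw [← h]
    congr 1
  have hinner_int : ∀ z : ℝ, g z ≠ 0 →
      Integrable (fun y : Fin 2 → ℝ => (U ((hRh H z)⁻¹ • e2.symm y)) ^ 2) := by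
    intro z hgz
    have hne : hRh H z ≠ 0 := (hhpos z (hgz_lt z hgz)).ne'
    have h1 := hUscale_int (hRh H z) hne
    rw [← he2pres.integrable_comp_emb e2.measurableEmbedding
      (g := fun y : Fin 2 → ℝ => (U ((hRh H z)⁻¹ • e2.symm y)) ^ 2), hcomp z]
    exact h1
  have hFmeas : Measurable F := by
    rw [hFdef]
    refine Measurable.mul (hgm.comp measurable_fst) (Measurable.pow_const ?_ 2)
    refine hUmeas.comp (Measurable.smul (f := fun p : ℝ × (Fin 2 → ℝ) => (hRh H p.1)⁻¹)
      (g := fun p : ℝ × (Fin 2 → ℝ) => e2.symm p.2) ?_ (e2.symm.measurable.comp measurable_snd))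
    exact ((hhcont.measurable).comp measurable_fst).inv
  have hslice_int : ∀ z : ℝ, Integrable (fun y : Fin 2 → ℝ => F (z, y)) := by
    intro z
    by_cases hgz : g z = 0
    · simp only [hFdef, hgz, zero_mul]
      exact integrable_zero _ _ _
    · simp only [hFdef]
      exact (hinner_int z hgz).const_mul _
  have hslice_val : ∀ z : ℝ, (∫ y : Fin 2 → ℝ, F (z, y)) = g z * hRh H z ^ 2 := by
    intro z
    simp only [hFdef]
    rw [integral_const_mul, hinner z]
  have hslice_norm : ∀ z : ℝ, (∫ y : Fin 2 → ℝ, ‖F (z, y)‖) = |g z| * hRh H z ^ 2 := by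
    intro z
    simp only [hFdef, norm_mul, Real.norm_eq_abs, abs_pow, sq_abs]
    rw [integral_const_mul, hinner z]
  have houter_int : Integrable fun z : ℝ => |g z| * hRh H z ^ 2 := by
    refine Integrable.mono'
      (g := fun z => (H ^ (-(1:ℝ)/3) * C ^ 2) *
        Set.indicator (Icc (-(H/2)) (H/2)) (fun _ => (1:ℝ)) z) ?_ ?_ ?_
    · refine Integrable.const_mul ?_ _
      rw [integrable_indicator_iff measurableSet_Icc]
      exact integrableOn_const measure_Icc_lt_top.ne
    · exact ((hgm.abs).mul ((hhcont.measurable).pow_const 2)).aestronglyMeasurable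
    · refine ae_of_all _ fun z => ?_
      have hnn : (0:ℝ) ≤ |g z| * hRh H z ^ 2 := mul_nonneg (abs_nonneg _) (sq_nonneg _)
      rw [Real.norm_eq_abs, abs_of_nonneg hnn]
      by_cases hz : |z| < H / 2
      · have h1 : z ∈ Icc (-(H/2)) (H/2) := by
          rw [abs_lt] at hz
          exact ⟨by linarith [hz.1], by linarith [hz.2]⟩
        simp only [Set.indicator_of_mem h1]
        have h2 : hRh H z ^ 2 ≤ 1 := by
          have h3 := hhpos z hz
          have h4 := hhle1 z
          nlinarith
        calc |g z| * hRh H z ^ 2 ≤ (H ^ (-(1:ℝ)/3) * C ^ 2) * 1 :=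
              mul_le_mul (hgbound z) h2 (sq_nonneg _) (by positivity)
          _ = _ := by ring
      · have hg0 : g z = 0 := by rw [hgdef]; simp only [if_neg hz]
        rw [hg0, abs_zero, zero_mul]
        exact mul_nonneg (by positivity) (Set.indicator_nonneg (fun _ _ => zero_le_one) z)
  have hFint : Integrable F ((volume : Measure ℝ).prod (volume : Measure (Fin 2 → ℝ))) := by
    refine (integrable_prod_iff hFmeas.aestronglyMeasurable).mpr ⟨ae_of_all _ hslice_int, ?_⟩
    exact houter_int.congr (ae_of_all _ fun z => (hslice_norm z).symm)
  have hFval : (∫ p, F p ∂((volume : Measure ℝ).prod (volume : Measure (Fin 2 → ℝ))))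
      = ∫ z : ℝ, g z * hRh H z ^ 2 := by
    rw [integral_prod _ hFint]
    exact integral_congr_ae (ae_of_all _ fun z => hslice_val z)
  -- transfer from E3
  set e3 : E3 ≃ᵐ (Fin 3 → ℝ) := (MeasurableEquiv.toLp 2 (Fin 3 → ℝ)).symm with he3def
  have he3pres : MeasurePreserving e3 := EuclideanSpace.volume_preserving_symm_measurableEquiv_toLp (Fin 3)
  set p3 : (Fin 3 → ℝ) ≃ᵐ (ℝ × (Fin 2 → ℝ)) :=
    MeasurableEquiv.piFinSuccAbove (fun _ => ℝ) 2 with hp3def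
  have hp3pres : MeasurePreserving p3 := volume_preserving_piFinSuccAbove (fun _ => ℝ) 2
  have hcoord : ∀ x : E3, f x = F (p3 (e3 x)) := by
    intro x
    rw [hprod x]
    have h2 : p3 (e3 x) = (x 2, fun j : Fin 2 => x (Fin.succAbove 2 j)) := rfl
    rw [h2, hFdef]
    simp only
    have harg : (EuclideanSpace.equiv (Fin 2) ℝ).symm ![x 0 / hRh H (x 2), x 1 / hRh H (x 2)]
        = (hRh H (x 2))⁻¹ • e2.symm (fun j : Fin 2 => x (Fin.succAbove 2 j)) := by
      ext i
      fin_cases i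
      · show x 0 / hRh H (x 2) = (hRh H (x 2))⁻¹ * x 0
        rw [div_eq_inv_mul]
      · show x 1 / hRh H (x 2) = (hRh H (x 2))⁻¹ * x 1
        rw [div_eq_inv_mul]
    rw [harg]
  have hEint : Integrable f := by
    have h1 : Integrable (F ∘ p3) := by
      rw [hp3pres.integrable_comp_emb p3.measurableEmbedding]
      rw [← Measure.volume_eq_prod] at hFint
      exact hFint
    have h2 : Integrable ((F ∘ p3) ∘ e3) := by
      rw [he3pres.integrable_comp_emb e3.measurableEmbedding]
      exact h1
    exact h2.congr (ae_of_all _ fun x => (hcoord x).symm)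
  have hvanish : ∀ x : E3, x ∉ rhombicWaveguide H → f x = 0 := by
    intro x hx
    by_cases hz : |x 2| < H / 2
    · rw [hprod x]
      have hpos := hhpos _ hz
      have h1 : ¬(|x 1| + |x 2| / H < 1/2) ∧ ¬(|x 0| + |x 2| / H < 1/2) := by
        simpa [rhombicWaveguide, not_or] using hx
      have hb0 : (1:ℝ)/2 - |x 2| / H ≤ |x 0| := by
        have := not_lt.mp h1.2; linarith
      have hb1 : (1:ℝ)/2 - |x 2| / H ≤ |x 1| := by
        have := not_lt.mp h1.1; linarith
      have hx0 : (1:ℝ)/2 ≤ |x 0 / hRh H (x 2)| := by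
        rw [abs_div, abs_of_pos hpos, le_div_iff₀ hpos]
        simp only [hRh]
        have hH' : 0 < H := hH0
        have : 1/2 * (1 - 2 * |x 2| / H) = 1/2 - |x 2| / H := by ring
        rw [this]
        exact hb0
      have hx1 : (1:ℝ)/2 ≤ |x 1 / hRh H (x 2)| := by
        rw [abs_div, abs_of_pos hpos, le_div_iff₀ hpos]
        simp only [hRh]
        have : 1/2 * (1 - 2 * |x 2| / H) = 1/2 - |x 2| / H := by ring
        rw [this]
        exact hb1
      have hnot : (EuclideanSpace.equiv (Fin 2) ℝ).symm
          ![x 0 / hRh H (x 2), x 1 / hRh H (x 2)] ∉ planarCross := by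
        intro hmem
        rcases hmem with hmem | hmem
        · change |x 0 / hRh H (x 2)| < 1/2 at hmem
          linarith
        · change |x 1 / hRh H (x 2)| < 1/2 at hmem
          linarith
      rw [hU0 _ hnot]
      ring
    · rw [hfdef]
      simp only [trialRh, if_neg hz]
      ring
  -- one-dimensional rescaling
  have hgh : ∀ z : ℝ, g z * hRh H z ^ 2 = H ^ (-(1:ℝ)/3) * ψ (H ^ (-(1:ℝ)/3) * z) := by
    intro z
    rw [hgdef, hψdef]
    simp only
    have hchiarg : 2 * H ^ (-(2:ℝ)/3) * (H ^ (-(1:ℝ)/3) * z) = 2 * z / H := by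
      rw [eq_div_iff hH0.ne']
      rw [show 2 * H ^ (-(2:ℝ)/3) * (H ^ (-(1:ℝ)/3) * z) * H
          = 2 * z * (H ^ (-(2:ℝ)/3) * H ^ (-(1:ℝ)/3) * H) from by ring, hts,
        inv_mul_cancel₀ hH0.ne', mul_one]
    by_cases hz : |z| < H / 2
    · rw [if_pos hz]
      have habs : |H ^ (-(1:ℝ)/3) * z| = H ^ (-(1:ℝ)/3) * |z| := by
        rw [abs_mul, abs_of_pos hs0]
      rw [habs]
      have hrw : 1 - 2 * H ^ (-(2:ℝ)/3) * (H ^ (-(1:ℝ)/3) * |z|) = hRh H z := by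
        simp only [hRh]
        have h5 : 2 * H ^ (-(2:ℝ)/3) * (H ^ (-(1:ℝ)/3) * |z|) = 2 * |z| / H := by
          rw [eq_div_iff hH0.ne']
          rw [show 2 * H ^ (-(2:ℝ)/3) * (H ^ (-(1:ℝ)/3) * |z|) * H
              = 2 * |z| * (H ^ (-(2:ℝ)/3) * H ^ (-(1:ℝ)/3) * H) from by ring, hts,
            inv_mul_cancel₀ hH0.ne', mul_one]
        rw [h5]
      rw [mul_assoc (2:ℝ) (H ^ (-(2:ℝ)/3)), hrw]
      ring
    · rw [if_neg hz]
      have hzero : χ (2 * H ^ (-(2:ℝ)/3) * (H ^ (-(1:ℝ)/3) * z)) = 0 := by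
        apply hχ0
        rw [hchiarg, abs_div, abs_of_pos hH0, le_div_iff₀ hH0]
        push_neg at hz
        have h6 : |2 * z| = 2 * |z| := by
          rw [abs_mul]; norm_num
        rw [h6]
        linarith
      rw [hzero]
      ring
  have hfinal : (∫ z : ℝ, g z * hRh H z ^ 2) = ∫ ζ : ℝ, ψ ζ := by
    have h7 : (∫ z : ℝ, g z * hRh H z ^ 2)
        = ∫ z : ℝ, H ^ (-(1:ℝ)/3) * ψ (H ^ (-(1:ℝ)/3) * z) :=
      integral_congr_ae (ae_of_all _ fun z => hgh z)
    rw [h7, integral_const_mul, Measure.integral_comp_mul_left (fun ζ => ψ ζ) (H ^ (-(1:ℝ)/3)),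
      smul_eq_mul, abs_of_pos (inv_pos.mpr hs0), ← mul_assoc, mul_inv_cancel₀ hs0.ne', one_mul]
  constructor
  · exact hEint.integrableOn
  · rw [setIntegral_eq_integral_of_forall_compl_eq_zero hvanish]
    calc (∫ x : E3, f x) = ∫ x : E3, F (p3 (e3 x)) := by
          rw [show f = fun x => F (p3 (e3 x)) from funext hcoord]
      _ = ∫ v : Fin 3 → ℝ, F (p3 v) := he3pres.integral_comp' (fun v => F (p3 v))
      _ = ∫ p, F p := hp3pres.integral_comp' (fun p => F p)
      _ = ∫ z : ℝ, g z * hRh H z ^ 2 := by rw [Measure.volume_eq_prod]; exact hFval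
      _ = ∫ ζ : ℝ, ψ ζ := hfinal


theorem rhombic_trial_almost_orthonormal
    (N : ℕ)
    (χ : ℝ → ℝ) (hχ : ContDiff ℝ (⊤ : ℕ∞) χ) (hχ01 : ∀ τ, 0 ≤ χ τ ∧ χ τ ≤ 1)
    (hχ1 : ∀ τ : ℝ, |τ| ≤ 1 / 4 → χ τ = 1) (hχ0 : ∀ τ : ℝ, 1 / 2 ≤ |τ| → χ τ = 0)
    (U : E2 → ℝ) (hUmeas : Measurable U)
    (hU0 : ∀ y ∉ planarCross, U y = 0)
    (hUnorm : ∫ y in planarCross, (U y) ^ 2 = 1)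
    (w : Fin N → ℝ → ℝ) (hwmeas : ∀ j, Measurable (w j))
    (horth : ∀ j k, ∫ ζ : ℝ, w j ζ * w k ζ = if j = k then (1 : ℝ) else 0)
    (C b : ℝ) (hC : 0 < C) (hb : 0 < b)
    (hdecay : ∀ j, ∀ ζ : ℝ, |w j ζ| ≤ C * Real.exp (-b * |ζ|)) :
    ∃ c : ℝ, 0 < c ∧
      (∀ H : ℝ, 1 ≤ H → ∀ j k,
        |(∫ x in rhombicWaveguide H, trialRh χ (w j) U H x * trialRh χ (w k) U H x) -
            (if j = k then (1 : ℝ) else 0)| ≤ c * H ^ (-(2 : ℝ) / 3)) ∧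
      ∃ H0 : ℝ, 0 < H0 ∧ ∀ H : ℝ, H0 < H →
        LinearIndependent ℝ (fun j : Fin N => trialRh χ (w j) U H) := by
  have hχc : Continuous χ := hχ.continuous
  set J : ℝ := ∫ ζ : ℝ, Real.exp (-b * |ζ|) with hJ
  have hJ0 : 0 ≤ J := integral_nonneg fun x => (Real.exp_pos _).le
  set c : ℝ := 8 * C ^ 2 / b * J + 1 with hc
  have hc0 : 0 < c := by positivity
  have hbound : ∀ H : ℝ, 1 ≤ H → ∀ j k,
      |(∫ x in rhombicWaveguide H, trialRh χ (w j) U H x * trialRh χ (w k) U H x) -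
          (if j = k then (1 : ℝ) else 0)| ≤ c * H ^ (-(2 : ℝ) / 3) := by
    intro H hH j k
    have hH0 : (0:ℝ) < H := lt_of_lt_of_le one_pos hH
    have ht0 : 0 < H ^ (-(2:ℝ)/3) := Real.rpow_pos_of_pos hH0 _
    obtain ⟨-, hkey⟩ := rhombic_key χ hχc hχ01 hχ0 U hUmeas hU0 hUnorm (w j) (w k)
      (hwmeas j) (hwmeas k) C b hC hb (hdecay j) (hdecay k) H hH
    rw [hkey, ← horth j k]
    calc |(∫ ζ : ℝ, (χ (2 * H ^ (-(2:ℝ)/3) * ζ)) ^ 2 * (w j ζ * w k ζ) *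
            (1 - 2 * H ^ (-(2:ℝ)/3) * |ζ|) ^ 2) - ∫ ζ : ℝ, w j ζ * w k ζ|
        ≤ (8 * C ^ 2 / b * J) * H ^ (-(2:ℝ)/3) :=
          rhombic_estimate χ hχc hχ01 hχ1 hχ0 (w j) (w k) (hwmeas j) (hwmeas k)
            C b hC hb (hdecay j) (hdecay k) _ ht0
      _ ≤ c * H ^ (-(2:ℝ)/3) := by
          refine mul_le_mul_of_nonneg_right ?_ ht0.le
          rw [hc]; linarith
  refine ⟨c, hc0, hbound, (c * N + 1) ^ ((3:ℝ)/2), ?_, ?_⟩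
  · have : (0:ℝ) < c * N + 1 := by positivity
    exact Real.rpow_pos_of_pos this _
  intro H hH
  have hcN0 : (0:ℝ) < c * N + 1 := by positivity
  have hcN1 : (1:ℝ) ≤ c * N + 1 := by
    have : (0:ℝ) ≤ c * N := by positivity
    linarith
  have hH1 : (1:ℝ) ≤ H := by
    have h1 : (1:ℝ) ≤ (c * N + 1) ^ ((3:ℝ)/2) := Real.one_le_rpow hcN1 (by norm_num)
    linarith
  have hH0 : (0:ℝ) < H := lt_of_lt_of_le one_pos hH1
  have hsmall : c * H ^ (-(2:ℝ)/3) * N < 1 := by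
    have h23 : ((c * N + 1) ^ ((3:ℝ)/2)) ^ ((2:ℝ)/3) = c * N + 1 := by
      rw [← Real.rpow_mul hcN0.le]
      norm_num
    have hlt : c * N + 1 < H ^ ((2:ℝ)/3) := by
      have := Real.rpow_lt_rpow (Real.rpow_nonneg hcN0.le _) hH (by norm_num : (0:ℝ) < 2/3)
      rwa [h23] at this
    have hP0 : (0:ℝ) < H ^ ((2:ℝ)/3) := Real.rpow_pos_of_pos hH0 _
    have hneg : H ^ (-(2:ℝ)/3) = (H ^ ((2:ℝ)/3))⁻¹ := by
      rw [show (-(2:ℝ)/3) = -((2:ℝ)/3) by norm_num, Real.rpow_neg hH0.le]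
    rw [hneg]
    have hcn : (0:ℝ) ≤ c * N := by positivity
    calc c * (H ^ ((2:ℝ)/3))⁻¹ * N = (c * N) * (H ^ ((2:ℝ)/3))⁻¹ := by ring
      _ < (c * N + 1) * (H ^ ((2:ℝ)/3))⁻¹ := by
          refine mul_lt_mul_of_pos_right (by linarith) (by positivity)
      _ ≤ (H ^ ((2:ℝ)/3)) * (H ^ ((2:ℝ)/3))⁻¹ := by
          refine mul_le_mul_of_nonneg_right hlt.le (by positivity)
      _ = 1 := mul_inv_cancel₀ hP0.ne'
  rw [Fintype.linearIndependent_iff]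
  intro a ha
  have hpt : ∀ x : E3, (∑ j, a j * trialRh χ (w j) U H x) = 0 := by
    intro x
    have h1 := congrFun ha x
    simpa [Finset.sum_apply] using h1
  set G : Fin N → Fin N → ℝ := fun j k =>
    ∫ x in rhombicWaveguide H, trialRh χ (w j) U H x * trialRh χ (w k) U H x with hG
  have hint : ∀ j k : Fin N, IntegrableOn
      (fun x => trialRh χ (w j) U H x * trialRh χ (w k) U H x) (rhombicWaveguide H) :=
    fun j k => (rhombic_key χ hχc hχ01 hχ0 U hUmeas hU0 hUnorm (w j) (w k)
      (hwmeas j) (hwmeas k) C b hC hb (hdecay j) (hdecay k) H hH1).1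
  have hGzero : ∀ k : Fin N, (∑ j, a j * G j k) = 0 := by
    intro k
    have h1 : (∫ x in rhombicWaveguide H,
        ∑ j, a j * (trialRh χ (w j) U H x * trialRh χ (w k) U H x)) = ∑ j, a j * G j k := by
      rw [integral_finset_sum]
      · exact Finset.sum_congr rfl fun j _ => by rw [integral_const_mul]
      · exact fun j _ => ((hint j k).const_mul (a j))
    have h2 : ∀ x : E3, (∑ j, a j * (trialRh χ (w j) U H x * trialRh χ (w k) U H x)) = 0 := by
      intro x
      have : (∑ j, a j * (trialRh χ (w j) U H x * trialRh χ (w k) U H x))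
          = (∑ j, a j * trialRh χ (w j) U H x) * trialRh χ (w k) U H x := by
        rw [Finset.sum_mul]
        exact Finset.sum_congr rfl fun j _ => by ring
      rw [this, hpt x, zero_mul]
    rw [← h1]
    simp only [h2]
    simp
  have hak : ∀ k : Fin N, a k = -∑ j, a j * (G j k - if j = k then 1 else 0) := by
    intro k
    have h3 : (∑ j, a j * (G j k - if j = k then 1 else 0))
        = (∑ j, a j * G j k) - ∑ j, a j * (if j = k then 1 else 0) := by
      rw [← Finset.sum_sub_distrib]
      exact Finset.sum_congr rfl fun j _ => by ring
    have h4 : (∑ j, a j * (if j = k then (1:ℝ) else 0)) = a k := by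
      simp [mul_ite]
    rw [h3, hGzero k, h4]
    ring
  set M : ℝ := ∑ j, |a j| with hM
  have hM0 : 0 ≤ M := Finset.sum_nonneg fun j _ => abs_nonneg _
  have hMk : ∀ k : Fin N, |a k| ≤ M * (c * H ^ (-(2:ℝ)/3)) := by
    intro k
    rw [hak k, abs_neg]
    calc |∑ j, a j * (G j k - if j = k then 1 else 0)|
        ≤ ∑ j, |a j * (G j k - if j = k then 1 else 0)| := Finset.abs_sum_le_sum_abs _ _
      _ ≤ ∑ j, |a j| * (c * H ^ (-(2:ℝ)/3)) := by
          refine Finset.sum_le_sum fun j _ => ?_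
          rw [abs_mul]
          exact mul_le_mul_of_nonneg_left (hbound H hH1 j k) (abs_nonneg _)
      _ = M * (c * H ^ (-(2:ℝ)/3)) := by rw [← Finset.sum_mul]
  have hMle : M ≤ M * (c * H ^ (-(2:ℝ)/3)) * N := by
    calc M = ∑ k, |a k| := rfl
      _ ≤ ∑ _k : Fin N, M * (c * H ^ (-(2:ℝ)/3)) := Finset.sum_le_sum fun k _ => hMk k
      _ = M * (c * H ^ (-(2:ℝ)/3)) * N := by
          rw [Finset.sum_const, Finset.card_univ, Fintype.card_fin, nsmul_eq_mul]
          ring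
  have hMzero : M = 0 := by
    by_contra hne
    have hMpos : 0 < M := lt_of_le_of_ne hM0 (Ne.symm hne)
    have : M * (c * H ^ (-(2:ℝ)/3)) * N < M * 1 := by
      have := mul_lt_mul_of_pos_left hsmall hMpos
      calc M * (c * H ^ (-(2:ℝ)/3)) * N = M * (c * H ^ (-(2:ℝ)/3) * N) := by ring
        _ < M * 1 := this
    rw [mul_one] at this
    linarith
  intro i
  have h5 : |a i| ≤ M := Finset.single_le_sum (fun j _ => abs_nonneg (a j)) (Finset.mem_univ i)
  rw [hMzero] at h5
  exact abs_eq_zero.mp (le_antisymm h5 (abs_nonneg _))
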